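/- arXiv:2511.21684 — 2 statements merged into one kernel-verified Lean document; each statement's English description precedes it below -/
import Mathlib

section
/- For every cardinal κ there is a cardinal θ such that for every d < ω and every function c : θ^d → κ, there exist pairwise disjoint infinite subsets H_0, ..., H_{d-1} of θ such that c is constant on the product ∏_{i<d} H_i. -/
universe u

open Cardinal

namespace Stmt2
attribute [local instance] Classical.propDecidable

def Good (κ : Type u) (d : ℕ) (θ : Type u) : Prop :=
  ∀ c : (Fin d → θ) → κ, ∃ H : Fin d → Set θ,
    (Pairwise fun i j => Disjoint (H i) (H j)) ∧ (∀ i, (H i).Infinite) ∧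
    ∃ k : κ, ∀ f : Fin d → θ, (∀ i, f i ∈ H i) → c f = k

theorem Good.mono {κ θ θ' : Type u} {d : ℕ} (h : Good κ d θ) (e : θ ↪ θ') :
    Good κ d θ' := by
  intro c
  obtain ⟨H, hdisj, hinf, k, hk⟩ := h (fun f => c (e ∘ f))
  refine ⟨fun i => e '' H i, ?_, fun i => (hinf i).image e.injective.injOn, k, ?_⟩
  · intro i j hij
    exact (Set.disjoint_image_iff e.injective).mpr (hdisj hij)
  · intro f hf
    choose g hg hge using hf
    have : f = e ∘ g := funext fun i => (hge i).symm
    rw [this]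
    exact hk g hg

theorem good_zero (κ θ : Type u) [Nonempty θ] : Good κ 0 θ := by
  intro c
  refine ⟨fun i => i.elim0, fun i => i.elim0, fun i => i.elim0, c (fun i => i.elim0), ?_⟩
  intro f _
  congr 1
  exact funext fun i => i.elim0

section Run

variable {κ Θ I : Type u} [LinearOrder I] [WellFoundedLT I] {d : ℕ}

/-- The guided run: at each stage pick a fresh element with the same type as the guide `x`. -/
noncomputable def run (c : (Fin (d+1) → Θ) → κ) (y0 x : Θ) : I → Θ :=
  WellFounded.fix wellFounded_lt (fun i ih =>
    if h : ({z : Θ | ∀ g : Fin d → {j : I // j < i},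
        c (Fin.snoc (fun m => ih (g m).1 (g m).2) z) =
        c (Fin.snoc (fun m => ih (g m).1 (g m).2) x)} \
      {z : Θ | ∃ j : I, ∃ hj : j < i, ih j hj = z}).Nonempty
    then h.choose else y0)

variable (c : (Fin (d+1) → Θ) → κ) (y0 x : Θ)

/-- the set of elements with the same type as `x` over the first `i` stages -/
def Cs (i : I) : Set Θ :=
  {z : Θ | ∀ g : Fin d → {j : I // j < i},
    c (Fin.snoc (fun m => run c y0 x (g m).1) z) =
    c (Fin.snoc (fun m => run c y0 x (g m).1) x)}

def Bs (i : I) : Set Θ := {z : Θ | ∃ j : I, ∃ _ : j < i, run c y0 x j = z}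

theorem run_eq (i : I) :
    run c y0 x i = if h : (Cs c y0 x i \ Bs c y0 x i).Nonempty
      then h.choose else y0 := by
  rw [run, WellFounded.fix_eq]
  rfl


theorem self_mem_Cs (i : I) : x ∈ Cs c y0 x i := fun _ => rfl

/-- The guide `x` is *alive* if at every stage a fresh element can be chosen. -/
def Alive (I : Type u) [LinearOrder I] [WellFoundedLT I] : Prop :=
  ∀ i : I, (Cs c y0 x i \ Bs c y0 x i).Nonempty

variable {c y0 x}

theorem run_mem (h : Alive c y0 x I) (i : I) :
    run c y0 x i ∈ Cs c y0 x i \ Bs c y0 x i := by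
  rw [run_eq, dif_pos (h i)]
  exact (h i).choose_spec

theorem run_injective (h : Alive c y0 x I) : Function.Injective (run (I := I) c y0 x) := by
  intro i j hij
  by_contra hne
  rcases Ne.lt_or_gt hne with hlt | hlt
  · exact (run_mem h j).2 ⟨i, hlt, hij⟩
  · exact (run_mem h i).2 ⟨j, hlt, hij.symm⟩

/-- End-homogeneity: colors of tuples ending at stage `i` agree with the guide color. -/
theorem run_endhom (h : Alive c y0 x I) (i : I) (g : Fin d → {j : I // j < i}) :
    c (Fin.snoc (fun m => run c y0 x (g m).1) (run c y0 x i)) =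
    c (Fin.snoc (fun m => run c y0 x (g m).1) x) :=
  (run_mem h i).1 g

/-- The full type sequence of a guide along its own run. -/
noncomputable def typeSeq (c : (Fin (d+1) → Θ) → κ) (y0 x : Θ) :
    ∀ i : I, (Fin d → {j : I // j < i}) → κ :=
  fun i g => c (Fin.snoc (fun m => run c y0 x (g m).1) x)

variable (c y0)

theorem run_determined {x y : Θ} (hT : typeSeq (I := I) c y0 x = typeSeq c y0 y) :
    run (I := I) c y0 x = run c y0 y := by
  funext i
  induction i using WellFoundedLT.induction with
  | _ i ih =>
    have hC : Cs c y0 x i = Cs c y0 y i := by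
      ext z
      unfold Cs
      constructor
      · intro hz g
        have h1 : (fun m => run c y0 x ((g m) : I)) = fun m => run c y0 y ((g m) : I) :=
          funext fun m => ih _ (g m).2
        have h2 := congrFun (congrFun hT i) g
        unfold typeSeq at h2
        rw [← h2, ← h1]
        exact hz g
      · intro hz g
        have h1 : (fun m => run c y0 x ((g m) : I)) = fun m => run c y0 y ((g m) : I) :=
          funext fun m => ih _ (g m).2
        have h2 := congrFun (congrFun hT i) g
        unfold typeSeq at h2
        rw [h2, h1]
        exact hz g
    have hB : Bs c y0 x i = Bs c y0 y i := by
      ext z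
      unfold Bs
      constructor
      · rintro ⟨j, hj, hje⟩; exact ⟨j, hj, by rw [← ih j hj]; exact hje⟩
      · rintro ⟨j, hj, hje⟩; exact ⟨j, hj, by rw [ih j hj]; exact hje⟩
    rw [run_eq, run_eq, hC, hB]

end Run

section Count

variable {κ Θ I : Type u} [LinearOrder I] [WellFoundedLT I] {d : ℕ}

theorem exists_alive (c : (Fin (d+1) → Θ) → κ) (y0 : Θ)
    (hbig : #(I × ∀ i : I, (Fin d → {j : I // j < i}) → κ) < #Θ) :
    ∃ x : Θ, Alive c y0 x I := by
  by_contra hal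
  push_neg at hal
  have hdie : ∀ x : Θ, ∃ j : I, run c y0 x j = x := by
    intro x
    have hx := hal x
    unfold Alive at hx
    push_neg at hx
    obtain ⟨i, hi⟩ := hx
    have hxc : x ∈ Cs c y0 x i := self_mem_Cs c y0 x i
    have hxb : x ∈ Bs c y0 x i := by
      by_contra hxb
      have : x ∈ Cs c y0 x i \ Bs c y0 x i := ⟨hxc, hxb⟩
      rw [hi] at this
      exact this
    obtain ⟨jx, _, hje⟩ := hxb
    exact ⟨jx, hje⟩
  choose j hj using hdie
  have hinj : Function.Injective
      (fun x : Θ => ((j x, typeSeq (I := I) c y0 x) :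
        I × ∀ i : I, (Fin d → {w : I // w < i}) → κ)) := by
    intro x y hxy
    have h1 : j x = j y := congrArg Prod.fst hxy
    have h2 : typeSeq (I := I) c y0 x = typeSeq c y0 y := congrArg Prod.snd hxy
    have hrun := run_determined c y0 h2
    calc x = run c y0 x (j x) := (hj x).symm
    _ = run c y0 y (j x) := by rw [hrun]
    _ = run c y0 y (j y) := by rw [h1]
    _ = y := hj y
  exact absurd (Cardinal.mk_le_of_injective hinj) (not_le.mpr hbig)

end Count

section Card

theorem mk_fin_arrow_le {α β : Type u} [Infinite β] (d : ℕ) (hab : #α ≤ #β) :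
    #(Fin d → α) ≤ #β := by
  have h1 : #(Fin d → α) ≤ #(List α) :=
    Cardinal.mk_le_of_injective (f := fun f => List.ofFn f) (by
      intro f g hfg
      exact List.ofFn_injective hfg)
  have h2 : #(List α) ≤ #(List β) := by
    obtain ⟨e⟩ := (Cardinal.le_def _ _).mp hab
    exact Cardinal.mk_le_of_injective (f := List.map e)
      (List.map_injective_iff.mpr e.injective)
  calc #(Fin d → α) ≤ #(List β) := h1.trans h2
  _ = #β := Cardinal.mk_list_eq_mk β

theorem card_bound {I κ : Type u} [LinearOrder I] [Infinite I] (d : ℕ)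
    (b : Cardinal.{u}) (hb : ℵ₀ ≤ b) (hI : #I ≤ b) (hκ : #κ ≤ b) :
    #(I × ∀ i : I, (Fin d → {w : I // w < i}) → κ) ≤ 2 ^ b := by
  have h2b : (2 : Cardinal.{u}) ^ b ≠ 0 := by
    exact Cardinal.power_ne_zero b two_ne_zero
  have hb2 : b ≤ 2 ^ b := (Cardinal.cantor b).le
  have hfac : ∀ i : I, #((Fin d → {w : I // w < i}) → κ) ≤ 2 ^ b := by
    intro i
    have he : #(Fin d → {w : I // w < i}) ≤ b := by
      refine (mk_fin_arrow_le d ?_).trans hI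
      exact Cardinal.mk_le_of_injective (f := (Subtype.val : {w : I // w < i} → I))
        Subtype.val_injective
    have harr : #((Fin d → {w : I // w < i}) → κ) = #κ ^ #(Fin d → {w : I // w < i}) :=
      (Cardinal.power_def κ (Fin d → {w : I // w < i})).symm
    rw [harr]
    rcases eq_or_ne #κ 0 with hk0 | hk0
    · rw [hk0]
      exact Cardinal.zero_power_le _ |>.trans (Cardinal.one_le_iff_ne_zero.mpr h2b)
    · calc #κ ^ #(Fin d → {w : I // w < i}) ≤ #κ ^ b := Cardinal.power_le_power_left hk0 he
      _ ≤ b ^ b := Cardinal.power_le_power_right hκ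
      _ = 2 ^ b := Cardinal.power_self_eq hb
  have hpi : #(∀ i : I, (Fin d → {w : I // w < i}) → κ) ≤ 2 ^ b := by
    rw [Cardinal.mk_pi]
    calc Cardinal.prod (fun i : I => #((Fin d → {w : I // w < i}) → κ))
        ≤ Cardinal.prod (fun _ : I => 2 ^ b) := Cardinal.prod_le_prod _ _ hfac
    _ = (2 ^ b) ^ #I := Cardinal.prod_const' _ _
    _ ≤ (2 ^ b) ^ b := Cardinal.power_le_power_left h2b hI
    _ = 2 ^ (b * b) := by rw [← Cardinal.power_mul]
    _ = 2 ^ b := by rw [Cardinal.mul_eq_self hb]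
  calc #(I × (∀ i : I, (Fin d → {w : I // w < i}) → κ))
      = #I * #(∀ i : I, (Fin d → {w : I // w < i}) → κ) := by
        rw [Cardinal.mk_prod, Cardinal.lift_id, Cardinal.lift_id]
  _ ≤ (2 ^ b) * (2 ^ b) := mul_le_mul' (hI.trans hb2) hpi
  _ = 2 ^ b := Cardinal.mul_eq_self (hb.trans hb2)

end Card

section Step

theorem good_step_param (κ θ Θ A : Type u) [LinearOrder A] [WellFoundedLT A]
    [Nonempty Θ] (d : ℕ) (b : Cardinal.{u}) (hbinf : ℵ₀ ≤ b) (hbκ : #κ ≤ b)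
    (hIb : #(A ⊕ₗ ℕ) ≤ b) (hΘb : (2 : Cardinal.{u}) ^ b < #Θ)
    (emb : θ ↪ A) (h : Good κ d θ) : Good κ (d+1) Θ := by
  classical
  intro c
  haveI : Infinite (A ⊕ₗ ℕ) := inferInstanceAs (Infinite (A ⊕ ℕ))
  haveI : WellFoundedLT (A ⊕ₗ ℕ) :=
    ⟨(inferInstance : IsWellFounded (A ⊕ ℕ) (Sum.Lex (fun a b : A => a < b) (fun a b : ℕ => a < b))).wf⟩
  obtain ⟨y0⟩ : Nonempty Θ := inferInstance
  obtain ⟨x, hx⟩ := exists_alive (I := A ⊕ₗ ℕ) c y0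
    (lt_of_le_of_lt (card_bound d b hbinf hIb hbκ) hΘb)
  set j : θ → Θ := fun a => run c y0 x ((toLex (Sum.inl (emb a))) : A ⊕ₗ ℕ) with hjdef
  have hjinj : Function.Injective j := by
    intro a a' haa'
    rw [hjdef] at haa'
    have := run_injective hx haa'
    exact emb.injective (Sum.inl_injective (toLex.injective this))
  -- apply the induction hypothesis to the pulled-back coloring
  obtain ⟨H', hdisj', hinf', k, hk⟩ := h (fun u : Fin d → θ => c (Fin.snoc (j ∘ u) x))
  set tail : Set Θ := Set.range (fun n : ℕ => run c y0 x ((toLex (Sum.inr n)) : A ⊕ₗ ℕ)) with htldef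
  have htinj : Function.Injective (fun n : ℕ => run c y0 x ((toLex (Sum.inr n)) : A ⊕ₗ ℕ)) :=
    fun n m hnm => Sum.inr_injective (toLex.injective (run_injective hx hnm))
  have hdisjtail : ∀ m : Fin d, Disjoint (j '' H' m) tail := by
    intro m
    rw [Set.disjoint_left]
    rintro z ⟨a, _, rfl⟩ ⟨n, hn⟩
    rw [hjdef] at hn
    have := toLex.injective (run_injective hx hn)
    exact Sum.inr_ne_inl this
  refine ⟨Fin.snoc (fun m : Fin d => j '' H' m) tail, ?_, ?_, k, ?_⟩
  · intro p q hpq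
    induction p using Fin.lastCases with
    | last =>
      induction q using Fin.lastCases with
      | last => exact absurd rfl hpq
      | cast m =>
        rw [Fin.snoc_last, Fin.snoc_castSucc]
        exact (hdisjtail m).symm
    | cast m =>
      induction q using Fin.lastCases with
      | last =>
        rw [Fin.snoc_last, Fin.snoc_castSucc]
        exact hdisjtail m
      | cast m' =>
        rw [Fin.snoc_castSucc, Fin.snoc_castSucc]
        refine (Set.disjoint_image_iff hjinj).mpr (hdisj' ?_)
        exact fun hmm' => hpq (by rw [hmm'])
  · intro p
    induction p using Fin.lastCases with
    | last =>
      rw [Fin.snoc_last]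
      exact Set.infinite_range_of_injective htinj
    | cast m =>
      rw [Fin.snoc_castSucc]
      exact (hinf' m).image hjinj.injOn
  · intro f hf
    have hlast := hf (Fin.last d)
    rw [Fin.snoc_last] at hlast
    obtain ⟨n, hn⟩ := hlast
    have hcast : ∀ m : Fin d, f m.castSucc ∈ j '' H' m := by
      intro m
      have := hf m.castSucc
      rwa [Fin.snoc_castSucc] at this
    choose t ht hjt using hcast
    have hfeq : f = Fin.snoc (j ∘ t) (run c y0 x ((toLex (Sum.inr n)) : A ⊕ₗ ℕ)) := by
      funext p
      induction p using Fin.lastCases with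
      | last => rw [Fin.snoc_last, ← hn]
      | cast m => rw [Fin.snoc_castSucc]; exact (hjt m).symm
    rw [hfeq]
    have hend := run_endhom hx ((toLex (Sum.inr n)) : A ⊕ₗ ℕ)
      (fun m : Fin d => ⟨(toLex (Sum.inl (emb (t m))) : A ⊕ₗ ℕ), Sum.Lex.inl_lt_inr _ _⟩)
    have hc : c (Fin.snoc (j ∘ t) (run c y0 x ((toLex (Sum.inr n)) : A ⊕ₗ ℕ))) =
        c (Fin.snoc (j ∘ t) x) := hend
    rw [hc]
    exact hk t ht

theorem exists_good_succ (κ θ : Type u) (d : ℕ) (h : Good κ d θ) :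
    ∃ Θ : Type u, Good κ (d+1) Θ := by
  classical
  refine ⟨(Order.succ ((2 : Cardinal.{u}) ^ (max (max #θ #κ) ℵ₀))).ord.ToType, ?_⟩
  have hbinf : ℵ₀ ≤ max (max #θ #κ) ℵ₀ := le_max_right _ _
  have hΘcard : #(Order.succ ((2 : Cardinal.{u}) ^ (max (max #θ #κ) ℵ₀))).ord.ToType
      = Order.succ ((2 : Cardinal.{u}) ^ (max (max #θ #κ) ℵ₀)) := Cardinal.mk_ord_toType _
  haveI : Nonempty (Order.succ ((2 : Cardinal.{u}) ^ (max (max #θ #κ) ℵ₀))).ord.ToType := by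
    rw [← Cardinal.mk_ne_zero_iff, hΘcard]
    exact ne_of_gt (lt_of_le_of_lt (Cardinal.zero_le _) (Order.lt_succ _))
  obtain ⟨emb⟩ : Nonempty (θ ↪ (max (max #θ #κ) ℵ₀).ord.ToType) := by
    rw [← Cardinal.le_def, Cardinal.mk_ord_toType]
    exact le_trans (le_max_left _ _) (le_max_left _ _)
  refine good_step_param κ θ _ _ d (max (max #θ #κ) ℵ₀) hbinf
    (le_trans (le_max_right _ _) (le_max_left _ _)) ?_ ?_ emb h
  · have h1 : #((max (max #θ #κ) ℵ₀).ord.ToType ⊕ₗ ℕ)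
        = #((max (max #θ #κ) ℵ₀).ord.ToType ⊕ ℕ) := Cardinal.mk_congr (toLex).symm
    have h2 : #((max (max #θ #κ) ℵ₀).ord.ToType ⊕ ℕ) = (max (max #θ #κ) ℵ₀) + ℵ₀ := by
      simp [Cardinal.mk_sum, Cardinal.mk_ord_toType]
    rw [h1, h2, Cardinal.add_eq_left hbinf hbinf]
  · rw [hΘcard]
    exact Order.lt_succ _

end Step

/-- A tower of types, the `d`-th of which is `d`-good. -/
noncomputable def Tower (κ : Type u) : (n : ℕ) → {θ : Type u // Good κ n θ}
  | 0 => ⟨PUnit, good_zero κ PUnit⟩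
  | (n+1) => ⟨(exists_good_succ κ (Tower κ n).1 n (Tower κ n).2).choose,
      (exists_good_succ κ (Tower κ n).1 n (Tower κ n).2).choose_spec⟩

theorem main (κ : Type u) : ∃ θ : Type u, ∀ (d : ℕ), Good κ d θ := by
  refine ⟨Σ n : ℕ, (Tower κ n).1, fun d => ?_⟩
  refine (Tower κ d).2.mono ⟨@Sigma.mk ℕ (fun n => (Tower κ n).1) d, ?_⟩
  exact sigma_mk_injective

end Stmt2


/-- Product Ramsey theorem: for every cardinal (here: type) `κ` there is a
cardinal (type) `θ` such that for every `d < ω` and every coloring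
`c : θ^d → κ` there are pairwise disjoint infinite sets `H i ⊆ θ` with `c`
constant on `∏_{i<d} H i`. -/
theorem stmt_2 (κ : Type u) :
    ∃ θ : Type u, ∀ (d : ℕ) (c : (Fin d → θ) → κ),
      ∃ H : Fin d → Set θ,
        (Pairwise fun i j => Disjoint (H i) (H j)) ∧
        (∀ i, (H i).Infinite) ∧
        ∃ k : κ, ∀ f : Fin d → θ, (∀ i, f i ∈ H i) → c f = k := by
  obtain ⟨θ, hθ⟩ := Stmt2.main κ
  exact ⟨θ, fun d => hθ d⟩
end

section
/- Fix a poset Q and integers m, d, and a 'type' t, i.e. a fixed finite sequence of elements of Q of some length k. Then there exists an integer M = M(t,m,d) such that: for every family {p_ᾱ : ᾱ ∈ M^d} of finite partial functions from an index set θ to Q, each of which has domain of size k and, when its domain is listed in increasing order (under some fixed linear order of θ), has value sequence equal to t, there exist subsets H_i ⊆ M (for i < d) each of size m such that the conditions {p_ᾱ : ᾱ ∈ ∏_{i<d} H_i} are pairwise compatible in P(θ,Q). -/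
/-- A finite partial function from `θ` to `Q`. -/
def FPF (I Q : Type*) : Type _ :=
  {p : I → Option Q // {i | p i ≠ none}.Finite}

/-- `p ≤ q` iff `dom q ⊆ dom p` and `p i ≤ q i` in `Q` for all `i ∈ dom q`. -/
def FPF.le {I Q : Type*} [PartialOrder Q] (p q : FPF I Q) : Prop :=
  (∀ i, q.1 i ≠ none → p.1 i ≠ none) ∧
    ∀ i x y, q.1 i = some x → p.1 i = some y → y ≤ x

/-- Two conditions are compatible if they have a common lower bound. -/
def FPF.Compatible {I Q : Type*} [PartialOrder Q] (p q : FPF I Q) : Prop :=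
  ∃ r : FPF I Q, r.le p ∧ r.le q

/-- `p` has type `t : Fin k → Q` if its domain has size `k` and, listed in
increasing order, the values of `p` form the sequence `t`. -/
def FPF.HasType {θ Q : Type*} [LinearOrder θ] {k : ℕ} (p : FPF θ Q)
    (t : Fin k → Q) : Prop :=
  ∃ (s : Finset θ) (h : s.card = k),
    (∀ i, p.1 i ≠ none ↔ i ∈ s) ∧
    ∀ j : Fin k, p.1 ((s.orderIsoOfFin h j : θ)) = some (t j)

open Finset

lemma preHomog {C : Type} [Fintype C] [DecidableEq C] [Nonempty C] :
    ∀ L : ℕ, ∃ n : ℕ, ∀ (s : Finset ℕ) (f : ℕ → ℕ → C), n ≤ s.card →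
      ∃ (xs : Fin L → ℕ) (c : Fin L → C), StrictMono xs ∧ (∀ j, xs j ∈ s) ∧
        ∀ j l : Fin L, j < l → f (xs j) (xs l) = c j := by
  intro L
  induction L with
  | zero =>
    exact ⟨0, fun s f _ => ⟨Fin.elim0, Fin.elim0, fun a => a.elim0,
      fun a => a.elim0, fun a => a.elim0⟩⟩
  | succ L ih =>
    obtain ⟨n, hn⟩ := ih
    refine ⟨Fintype.card C * n + 1, fun s f hs => ?_⟩
    have hne : s.Nonempty := card_pos.mp (by omega)
    set x := s.min' hne with hx
    have hxs : x ∈ s := s.min'_mem hne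
    have hcard : Fintype.card C * n ≤ (s.erase x).card := by
      rw [card_erase_of_mem hxs]; omega
    obtain ⟨c0, -, hc0⟩ := Finset.exists_le_card_fiber_of_mul_le_card_of_maps_to
      (f := fun y => f x y) (t := (Finset.univ : Finset C))
      (fun a _ => mem_univ _) univ_nonempty (by simpa using hcard)
    obtain ⟨xs, c, hmono, hmem, hcol⟩ := hn _ f hc0
    have hmem' : ∀ j, xs j ∈ s.erase x ∧ f x (xs j) = c0 := by
      intro j; simpa using mem_filter.mp (hmem j)
    have hlt : ∀ j, x < xs j := by
      intro j
      have h1 := (mem_erase.mp (hmem' j).1)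
      exact lt_of_le_of_ne (s.min'_le _ (h1.2)) (Ne.symm h1.1)
    refine ⟨Fin.cons x xs, Fin.cons c0 c, ?_, ?_, ?_⟩
    · intro j l hjl
      induction l using Fin.cases with
      | zero => exact absurd hjl (by simp [Fin.not_lt_zero])
      | succ l =>
        induction j using Fin.cases with
        | zero => simpa using hlt l
        | succ j =>
          simpa using hmono (by exact_mod_cast Fin.succ_lt_succ_iff.mp hjl)
    · intro j
      induction j using Fin.cases with
      | zero => simpa using hxs
      | succ j => simpa using (mem_erase.mp (hmem' j).1).2
    · intro j l hjl
      induction l using Fin.cases with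
      | zero => exact absurd hjl (by simp [Fin.not_lt_zero])
      | succ l =>
        induction j using Fin.cases with
        | zero => simpa using (hmem' l).2
        | succ j =>
          simpa using hcol j l (Fin.succ_lt_succ_iff.mp hjl)

lemma ramseyPairs {C : Type} [Fintype C] [DecidableEq C] [Nonempty C] (m : ℕ) :
    ∃ n : ℕ, ∀ (s : Finset ℕ) (f : ℕ → ℕ → C), n ≤ s.card →
      ∃ u, u ⊆ s ∧ u.card = m ∧ ∃ c, ∀ x ∈ u, ∀ y ∈ u, x < y → f x y = c := by
  obtain ⟨n, hn⟩ := preHomog (C := C) (Fintype.card C * m)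
  refine ⟨n, fun s f hs => ?_⟩
  obtain ⟨xs, c, hmono, hmem, hcol⟩ := hn s f hs
  obtain ⟨c0, -, hc0⟩ := Finset.exists_le_card_fiber_of_mul_le_card_of_maps_to
    (s := (Finset.univ : Finset (Fin (Fintype.card C * m)))) (n := m)
    (f := c) (t := (Finset.univ : Finset C)) (fun a _ => mem_univ _) univ_nonempty
    (by simp)
  obtain ⟨J, hJsub, hJcard⟩ := Finset.exists_subset_card_eq hc0
  refine ⟨J.image xs, ?_, ?_, c0, ?_⟩
  · intro y hy
    obtain ⟨j, -, rfl⟩ := mem_image.mp hy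
    exact hmem j
  · rw [card_image_of_injective _ hmono.injective, hJcard]
  · intro y hy z hz hyz
    obtain ⟨j, hj, rfl⟩ := mem_image.mp hy
    obtain ⟨l, hl, rfl⟩ := mem_image.mp hz
    have hjl : j < l := hmono.lt_iff_lt.mp hyz
    rw [hcol j l hjl]
    have := mem_filter.mp (hJsub hj)
    exact this.2

lemma ramseyDiag {C D : Type} [Fintype C] [DecidableEq C] [Nonempty C]
    [Fintype D] [DecidableEq D] [Nonempty D] (m : ℕ) :
    ∃ n : ℕ, ∀ (s : Finset ℕ) (f : ℕ → ℕ → C) (g : ℕ → D), n ≤ s.card →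
      ∃ u, u ⊆ s ∧ u.card = m ∧ (∃ c, ∀ x ∈ u, ∀ y ∈ u, x < y → f x y = c) ∧
        ∃ e, ∀ x ∈ u, g x = e := by
  obtain ⟨n, hn⟩ := ramseyPairs (C := C) (Fintype.card D * m)
  refine ⟨n, fun s f g hs => ?_⟩
  obtain ⟨u, hus, hucard, c, hc⟩ := hn s f hs
  obtain ⟨e, -, he⟩ := Finset.exists_le_card_fiber_of_mul_le_card_of_maps_to
    (s := u) (n := m)
    (f := g) (t := (Finset.univ : Finset D)) (fun a _ => mem_univ _) univ_nonempty
    (by simp [hucard])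
  obtain ⟨v, hvsub, hvcard⟩ := Finset.exists_subset_card_eq he
  have hvu : v ⊆ u := hvsub.trans (filter_subset _ _)
  refine ⟨v, hvu.trans hus, hvcard, ⟨c, fun x hx y hy hxy => hc x (hvu hx) y (hvu hy) hxy⟩,
    ⟨e, fun x hx => (mem_filter.mp (hvsub hx)).2⟩⟩

lemma polRamsey (d : ℕ) :
    ∀ {C : Type} [Fintype C] [DecidableEq C] (m : ℕ),
    ∃ M : ℕ, 0 < M ∧ ∀ f : (Fin d → ℕ) → (Fin d → ℕ) → C,
      ∃ H : Fin d → Finset ℕ,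
        (∀ i, H i ⊆ Finset.range M) ∧ (∀ i, (H i).card = m) ∧
        ∀ a b a' b' : Fin d → ℕ, (∀ i, a i ∈ H i) → (∀ i, b i ∈ H i) →
          (∀ i, a' i ∈ H i) → (∀ i, b' i ∈ H i) →
          (∀ i, cmp (a i) (b i) = cmp (a' i) (b' i)) → f a b = f a' b' := by
  induction d with
  | zero =>
    intro C _ _ m
    refine ⟨1, Nat.one_pos, fun f => ⟨fun i => i.elim0, fun i => i.elim0, fun i => i.elim0, ?_⟩⟩
    intro a b a' b' _ _ _ _ _
    rw [Subsingleton.elim a a', Subsingleton.elim b b']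
  | succ d ih =>
    intro C _ _ m
    rcases Nat.eq_zero_or_pos m with rfl | hm
    · refine ⟨1, Nat.one_pos, fun f => ⟨fun _ => ∅, by simp, by simp, ?_⟩⟩
      intro a b a' b' ha _ _ _ _
      exact absurd (ha 0) (notMem_empty _)
    · -- m ≥ 1
      obtain ⟨N, hNpos, hN⟩ := ih (C := C × C × C) m
      by_cases hC : Nonempty C
      · set T := (Fin d → Fin N) with hT
        haveI : Nonempty ((T → T → C) × (T → T → C)) := by
          obtain ⟨c⟩ := hC; exact ⟨⟨fun _ _ => c, fun _ _ => c⟩⟩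
        haveI : Nonempty (T → T → C) := by obtain ⟨c⟩ := hC; exact ⟨fun _ _ => c⟩
        obtain ⟨n, hn⟩ := ramseyDiag (C := (T → T → C) × (T → T → C)) (D := T → T → C) m
        refine ⟨max n N, lt_of_lt_of_le hNpos (le_max_right _ _), fun f => ?_⟩
        set emb : T → (Fin d → ℕ) := fun u i => (u i : ℕ) with hemb
        set G : ℕ → ℕ → (T → T → C) :=
          fun x y u v => f (Fin.cons x (emb u)) (Fin.cons y (emb v)) with hG
        obtain ⟨u, husub, hucard, ⟨⟨c₁, c₂⟩, hpair⟩, ⟨c₃, hdiagc⟩⟩ :=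
          hn (Finset.range n) (fun x y => (G x y, G y x)) (fun x => G x x) (by simp)
        set trunc : (Fin d → ℕ) → T := fun w i => ⟨w i % N, Nat.mod_lt _ hNpos⟩ with htr
        obtain ⟨Ht, hHtsub, hHtcard, hhom⟩ :=
          hN (fun w z => (c₁ (trunc w) (trunc z), c₃ (trunc w) (trunc z), c₂ (trunc w) (trunc z)))
        set HH : Fin (d+1) → Finset ℕ := Fin.cons u Ht with hHH
        refine ⟨HH, ?_, ?_, ?_⟩
        · intro i
          induction i using Fin.cases with
          | zero => simpa [hHH] using husub.trans (range_subset_range.mpr (le_max_left _ _))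
          | succ i => simpa [hHH] using (hHtsub i).trans (range_subset_range.mpr (le_max_right _ _))
        · intro i
          induction i using Fin.cases with
          | zero => simpa [hHH] using hucard
          | succ i => simpa [hHH] using hHtcard i
        · intro a b a' b' ha hb ha' hb' hpat
          have ha0 : a 0 ∈ u := by simpa [hHH] using ha 0
          have hb0 : b 0 ∈ u := by simpa [hHH] using hb 0
          have ha0' : a' 0 ∈ u := by simpa [hHH] using ha' 0
          have hb0' : b' 0 ∈ u := by simpa [hHH] using hb' 0
          have hta : ∀ i, Fin.tail a i ∈ Ht i := fun i => by simpa [hHH, Fin.tail] using ha i.succ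
          have htb : ∀ i, Fin.tail b i ∈ Ht i := fun i => by simpa [hHH, Fin.tail] using hb i.succ
          have hta' : ∀ i, Fin.tail a' i ∈ Ht i := fun i => by simpa [hHH, Fin.tail] using ha' i.succ
          have htb' : ∀ i, Fin.tail b' i ∈ Ht i := fun i => by simpa [hHH, Fin.tail] using hb' i.succ
          have hlt : ∀ (w : Fin (d+1) → ℕ), (∀ i, w i ∈ HH i) →
              emb (trunc (Fin.tail w)) = Fin.tail w := by
            intro w hw
            funext i
            have : Fin.tail w i < N := mem_range.mp (hHtsub i (by simpa [hHH, Fin.tail] using hw i.succ))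
            simp [hemb, htr, Nat.mod_eq_of_lt this]
          have key : ∀ (w : Fin (d+1) → ℕ), (∀ i, w i ∈ HH i) →
              ∀ (z : Fin (d+1) → ℕ), (∀ i, z i ∈ HH i) →
              f w z = G (w 0) (z 0) (trunc (Fin.tail w)) (trunc (Fin.tail z)) := by
            intro w hw z hz
            rw [hG]
            simp only
            rw [hlt w hw, hlt z hz, Fin.cons_self_tail, Fin.cons_self_tail]
          rw [key a ha b hb, key a' ha' b' hb']
          have htail : (c₁ (trunc (Fin.tail a)) (trunc (Fin.tail b)),
              c₃ (trunc (Fin.tail a)) (trunc (Fin.tail b)),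
              c₂ (trunc (Fin.tail a)) (trunc (Fin.tail b))) =
              (c₁ (trunc (Fin.tail a')) (trunc (Fin.tail b')),
              c₃ (trunc (Fin.tail a')) (trunc (Fin.tail b')),
              c₂ (trunc (Fin.tail a')) (trunc (Fin.tail b'))) :=
            hhom _ _ _ _ hta htb hta' htb' (fun i => hpat i.succ)
          have h0 := hpat 0
          rcases hcmp : cmp (a 0) (b 0) with _ | _ | _
          · -- lt
            have h1 : a 0 < b 0 := (cmp_eq_lt_iff _ _).mp hcmp
            have h2 : a' 0 < b' 0 := (cmp_eq_lt_iff _ _).mp (by rw [← h0, hcmp])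
            have e1 : G (a 0) (b 0) = c₁ := congrArg Prod.fst (hpair _ ha0 _ hb0 h1)
            have e2 : G (a' 0) (b' 0) = c₁ := congrArg Prod.fst (hpair _ ha0' _ hb0' h2)
            rw [e1, e2]
            exact congrArg (fun q => q.1) htail
          · -- eq
            have h1 : a 0 = b 0 := (cmp_eq_eq_iff _ _).mp hcmp
            have h2 : a' 0 = b' 0 := (cmp_eq_eq_iff _ _).mp (by rw [← h0, hcmp])
            have e1 : G (a 0) (b 0) = c₃ := by rw [h1]; exact hdiagc _ hb0
            have e2 : G (a' 0) (b' 0) = c₃ := by rw [h2]; exact hdiagc _ hb0'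
            rw [e1, e2]
            exact congrArg (fun q => q.2.1) htail
          · -- gt
            have h1 : b 0 < a 0 := (cmp_eq_gt_iff _ _).mp hcmp
            have h2 : b' 0 < a' 0 := (cmp_eq_gt_iff _ _).mp (by rw [← h0, hcmp])
            have e1 : G (a 0) (b 0) = c₂ := congrArg Prod.snd (hpair _ hb0 _ ha0 h1)
            have e2 : G (a' 0) (b' 0) = c₂ := congrArg Prod.snd (hpair _ hb0' _ ha0' h2)
            rw [e1, e2]
            exact congrArg (fun q => q.2.2) htail
      · -- C empty: no f exists... but f : nonempty domain → C, so derive contradiction from f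
        refine ⟨1, Nat.one_pos, fun f => absurd ⟨f (fun _ => 0) (fun _ => 0)⟩ hC⟩

instance : Fintype Ordering :=
  ⟨{Ordering.lt, Ordering.eq, Ordering.gt}, by intro x; cases x <;> simp⟩

/-- Two conditions that agree on common domain are compatible. -/
lemma FPF.compatible_of_agree {θ Q : Type*} [PartialOrder Q] (p q : FPF θ Q)
    (h : ∀ i, p.1 i ≠ none → q.1 i ≠ none → p.1 i = q.1 i) : p.Compatible q := by
  refine ⟨⟨fun i => (p.1 i).elim (q.1 i) some, ?_⟩, ⟨?_, ?_⟩, ⟨?_, ?_⟩⟩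
  · apply Set.Finite.subset (p.2.union q.2)
    intro i hi
    simp only [Set.mem_setOf_eq] at hi
    by_cases hp : p.1 i = none
    · right; simp only [Set.mem_setOf_eq]; intro hq; apply hi; simp [hp, hq]
    · left; exact hp
  · intro i hp
    obtain ⟨x, hx⟩ := Option.ne_none_iff_exists'.mp hp
    simp [hx]
  · intro i x y hx hy
    simp only [hx, Option.elim] at hy
    exact le_of_eq (Option.some_injective _ hy).symm
  · intro i hq
    by_cases hp : p.1 i = none
    · simpa [hp] using hq
    · obtain ⟨x, hx⟩ := Option.ne_none_iff_exists'.mp hp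
      simp [hx]
  · intro i x y hx hy
    by_cases hp : p.1 i = none
    · simp only [hp, Option.elim, hx] at hy
      exact le_of_eq (Option.some_injective _ hy).symm
    · obtain ⟨z, hz⟩ := Option.ne_none_iff_exists'.mp hp
      have heq := h i (by simp [hz]) (by simp [hx])
      rw [hz, hx] at heq
      simp only [hz, Option.elim] at hy
      have h1 : z = y := Option.some_injective _ hy
      have h2 : z = x := Option.some_injective _ heq
      exact le_of_eq (h1.symm.trans h2)

/-- For every type `t` (a finite value sequence of length `k`) and integers
`m, d` there is `M = M(t,m,d)` such that any family `{p ᾱ : ᾱ ∈ M^d}` of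
conditions of type `t` admits sets `H i ⊆ M` of size `m` with all conditions
`p ᾱ`, for `ᾱ ∈ ∏ H i`, pairwise compatible. -/
theorem stmt_3 {θ Q : Type*} [LinearOrder θ] [PartialOrder Q]
    {k : ℕ} (t : Fin k → Q) (m d : ℕ) :
    ∃ M : ℕ, ∀ p : (Fin d → Fin M) → FPF θ Q,
      (∀ a, (p a).HasType t) →
      ∃ H : Fin d → Finset (Fin M),
        (∀ i, (H i).card = m) ∧
        ∀ a b : Fin d → Fin M, (∀ i, a i ∈ H i) → (∀ i, b i ∈ H i) →
          (p a).Compatible (p b) := by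
  classical
  obtain ⟨M₀, hM₀pos, hPR⟩ := polRamsey d (C := Fin k → Fin k → Ordering) (max m 3)
  refine ⟨M₀, fun p hp => ?_⟩
  choose S hS hdom hval using hp
  set E : (Fin d → Fin M₀) → Fin k → θ :=
    fun a j => ((S a).orderIsoOfFin (hS a) j : θ) with hE
  have hEinj : ∀ a, Function.Injective (E a) := by
    intro a j j' hjj
    have := Subtype.coe_injective (α := θ) (p := fun x => x ∈ S a) hjj
    exact ((S a).orderIsoOfFin (hS a)).injective this
  have hEmem : ∀ a j, E a j ∈ S a := fun a j => ((S a).orderIsoOfFin (hS a) j).2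
  have hEsurj : ∀ a i, i ∈ S a → ∃ j, E a j = i := by
    intro a i hi
    exact ⟨((S a).orderIsoOfFin (hS a)).symm ⟨i, hi⟩,
      congrArg Subtype.val (((S a).orderIsoOfFin (hS a)).apply_symm_apply ⟨i, hi⟩)⟩
  set tF : (Fin d → ℕ) → (Fin d → Fin M₀) :=
    fun u i => ⟨u i % M₀, Nat.mod_lt _ hM₀pos⟩ with htF
  set f : (Fin d → ℕ) → (Fin d → ℕ) → (Fin k → Fin k → Ordering) :=
    fun u v j j' => cmp (E (tF u) j) (E (tF v) j') with hf
  obtain ⟨Hn, hHsub, hHcard, hhom⟩ := hPR f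
  have hHlt : ∀ i x, x ∈ Hn i → x < M₀ := fun i x hx => mem_range.mp (hHsub i hx)
  set HF : Fin d → Finset (Fin M₀) := fun i => (Hn i).attachFin (hHlt i) with hHF
  have hHFcard : ∀ i, (HF i).card = max m 3 := fun i => by
    rw [hHF]; rw [Finset.card_attachFin]; exact hHcard i
  have hKex : ∀ i : Fin d, ∃ K ⊆ HF i, K.card = m :=
    fun i => Finset.exists_subset_card_eq (by rw [hHFcard i]; exact le_max_left _ _)
  choose K hKsub hKcard using hKex
  refine ⟨K, hKcard, ?_⟩
  intro a b ha hb
  -- the ℕ versions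
  set an : Fin d → ℕ := fun i => (a i : ℕ) with han
  set bn : Fin d → ℕ := fun i => (b i : ℕ) with hbn
  have hamem : ∀ i, an i ∈ Hn i := fun i =>
    (Finset.mem_attachFin _).mp (hKsub i (ha i))
  have hbmem : ∀ i, bn i ∈ Hn i := fun i =>
    (Finset.mem_attachFin _).mp (hKsub i (hb i))
  have htFa : tF an = a := by
    funext i; apply Fin.ext
    simp [htF, han, Nat.mod_eq_of_lt (a i).2]
  have htFb : tF bn = b := by
    funext i; apply Fin.ext
    simp [htF, hbn, Nat.mod_eq_of_lt (b i).2]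
  -- three generic points in each H i
  set w : (i : Fin d) → Fin (max m 3) → ℕ :=
    fun i j => (Hn i).orderEmbOfFin (hHcard i) j with hw
  have hwmem : ∀ i j, w i j ∈ Hn i := fun i j => (Hn i).orderEmbOfFin_mem (hHcard i) j
  have hwmono : ∀ i, StrictMono (w i) := fun i =>
    ((Hn i).orderEmbOfFin (hHcard i)).strictMono
  have h3 : (3 : ℕ) ≤ max m 3 := le_max_right _ _
  set i0 : Fin (max m 3) := ⟨0, by omega⟩
  set i1 : Fin (max m 3) := ⟨1, by omega⟩
  set i2 : Fin (max m 3) := ⟨2, by omega⟩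
  have h01 : i0 < i1 := by simp [i0, i1, Fin.lt_def]
  have h12 : i1 < i2 := by simp [i1, i2, Fin.lt_def]
  have h02 : i0 < i2 := by simp [i0, i2, Fin.lt_def]
  set ε : Fin d → Ordering := fun i => cmp (an i) (bn i) with hεdef
  set A : Fin d → ℕ := fun i => match ε i with
    | .lt => w i i0 | .eq => w i i0 | .gt => w i i2 with hA
  set B : Fin d → ℕ := fun i => match ε i with
    | .lt => w i i1 | .eq => w i i0 | .gt => w i i1 with hB
  set Cc : Fin d → ℕ := fun i => match ε i with
    | .lt => w i i2 | .eq => w i i0 | .gt => w i i0 with hC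
  have hAmem : ∀ i, A i ∈ Hn i := by
    intro i; rw [hA]; rcases he : ε i <;> simp only [he] <;> exact hwmem i _
  have hBmem : ∀ i, B i ∈ Hn i := by
    intro i; rw [hB]; rcases he : ε i <;> simp only [he] <;> exact hwmem i _
  have hCmem : ∀ i, Cc i ∈ Hn i := by
    intro i; rw [hC]; rcases he : ε i <;> simp only [he] <;> exact hwmem i _
  have hAB : ∀ i, cmp (A i) (B i) = ε i := by
    intro i; rw [hA, hB]
    rcases he : ε i
    · simp only [he]; exact (cmp_eq_lt_iff _ _).mpr (hwmono i h01)
    · simp only [he]; exact (cmp_eq_eq_iff _ _).mpr rfl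
    · simp only [he]; exact (cmp_eq_gt_iff _ _).mpr (hwmono i h12)
  have hBC : ∀ i, cmp (B i) (Cc i) = ε i := by
    intro i; rw [hB, hC]
    rcases he : ε i
    · simp only [he]; exact (cmp_eq_lt_iff _ _).mpr (hwmono i h12)
    · simp only [he]; exact (cmp_eq_eq_iff _ _).mpr rfl
    · simp only [he]; exact (cmp_eq_gt_iff _ _).mpr (hwmono i h01)
  have hAC : ∀ i, cmp (A i) (Cc i) = ε i := by
    intro i; rw [hA, hC]
    rcases he : ε i
    · simp only [he]; exact (cmp_eq_lt_iff _ _).mpr (hwmono i h02)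
    · simp only [he]; exact (cmp_eq_eq_iff _ _).mpr rfl
    · simp only [he]; exact (cmp_eq_gt_iff _ _).mpr (hwmono i h02)
  have e1 : f an bn = f A B := hhom _ _ _ _ hamem hbmem hAmem hBmem (fun i => (hAB i).symm)
  have e2 : f A B = f B Cc := hhom _ _ _ _ hAmem hBmem hBmem hCmem (fun i => (hAB i).trans (hBC i).symm)
  have e3 : f A B = f A Cc := hhom _ _ _ _ hAmem hBmem hAmem hCmem (fun i => (hAB i).trans (hAC i).symm)
  set τ := f A B with hτ
  have hdiag : ∀ j j', τ j j' = Ordering.eq → j = j' := by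
    intro j j' hjj
    have q1 : E (tF A) j = E (tF B) j' := (cmp_eq_eq_iff _ _).mp hjj
    have q2' : f B Cc j j' = Ordering.eq := by rw [← e2]; exact hjj
    have q3' : f A Cc j j' = Ordering.eq := by rw [← e3]; exact hjj
    have q2 : E (tF B) j = E (tF Cc) j' := (cmp_eq_eq_iff _ _).mp q2'
    have q3 : E (tF A) j = E (tF Cc) j' := (cmp_eq_eq_iff _ _).mp q3'
    have : E (tF B) j = E (tF B) j' := by rw [q2, ← q3, q1]
    exact hEinj _ this
  apply FPF.compatible_of_agree
  intro i hpa hpb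
  have hia : i ∈ S a := (hdom a i).mp hpa
  have hib : i ∈ S b := (hdom b i).mp hpb
  obtain ⟨j, hj⟩ := hEsurj a i hia
  obtain ⟨j', hj'⟩ := hEsurj b i hib
  have hfab : f an bn j j' = Ordering.eq := by
    rw [hf]; simp only [htFa, htFb]
    rw [hj, hj']; exact (cmp_eq_eq_iff _ _).mpr rfl
  have : τ j j' = Ordering.eq := by rw [← e1]; exact hfab
  have hjj : j = j' := hdiag _ _ this
  have v1 : (p a).1 i = some (t j) := by rw [← hj]; exact hval a j
  have v2 : (p b).1 i = some (t j') := by rw [← hj']; exact hval b j'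
  rw [v1, v2, hjj]
end
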